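/- arXiv:2602.11859 — 2 statements merged into one kernel-verified Lean document; each statement's English description precedes it below -/
import Mathlib

section
/- Fix s ∈ X and N ≥ 1. Every unit flow θ to depth N satisfies 𝔈_s(θ) ≥ ∑_{k=0}^{N−1} m^k/(u_{2k+1}(s) − u_{2k}(s)) in [0,∞], where a summand with zero denominator is +∞. Consequently, the effective resistance satisfies R_N(s) ≥ ∑_{k=0}^{N−1} m^k/(u_{2k+1}(s) − u_{2k}(s)), and if the series ∑_{k=0}^∞ m^k/(u_{2k+1}(s) − u_{2k}(s)) diverges, then R_N(s) → ∞ as N → ∞. -/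
/-!
Every level `{|w| = k}` of the word tree is a cutset carrying the whole unit flow, so by
Sedrakyan's inequality its energy is at least `1 / ∑_{|w| = k, i} c_s(w, wi)`. Iterating the
pullback gives `K_{n+k}(s, t) = ∑_{|w| = k} K_n(φ_w s, φ_w t)`, so these conductances add up
to `(u_{2k+1}(s) - u_{2k}(s)) / m^k`. Summing over the levels `k < N` gives the bound for
every unit flow, hence for `R_N(s)`.
-/

open Filter Topology
open scoped BigOperators ComplexOrder ENNReal

/-- A kernel `J : X × X → ℂ` is positive definite: every finite Gram sum
`∑ conj (c α) * c β * J (s α) (s β)` is a nonnegative real number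
(using the partial order on `ℂ`). -/
def IsPD {X : Type*} (J : X → X → ℂ) : Prop :=
  ∀ (r : ℕ) (c : Fin r → ℂ) (p : Fin r → X),
    0 ≤ ∑ α, ∑ β, (starRingEnd ℂ) (c α) * c β * J (p α) (p β)

/-- The pullback operator `(LJ)(s,t) = ∑ i, J (φ i s) (φ i t)`. -/
noncomputable def pullback {X : Type*} (m : ℕ) (φ : Fin m → X → X) (J : X → X → ℂ) :
    X → X → ℂ :=
  fun s t => ∑ i, J (φ i s) (φ i t)

/-- For a word `w = i₁⋯iₙ ∈ {1,…,m}ⁿ`, `phiW φ w = φ_{iₙ} ∘ ⋯ ∘ φ_{i₁}`. -/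
def phiW {X : Type*} {m : ℕ} (φ : Fin m → X → X) : {n : ℕ} → (Fin n → Fin m) → X → X
  | 0, _, x => x
  | n + 1, w, x => φ (w (Fin.last n)) (phiW φ (fun i => w i.castSucc) x)

/-- The tower `K₀ = K`, `K_{n+1} = L Kₙ`. -/
noncomputable def tower {X : Type*} (m : ℕ) (φ : Fin m → X → X) (K : X → X → ℂ) :
    ℕ → X → X → ℂ
  | 0 => K
  | n + 1 => pullback m φ (tower m φ K n)

/-- The diagonal `uₙ(s) = Kₙ(s,s)` (a real number, as `Kₙ` is p.d.). -/
noncomputable def diag {X : Type*} (m : ℕ) (φ : Fin m → X → X) (K : X → X → ℂ)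
    (n : ℕ) (s : X) : ℝ :=
  (tower m φ K n s s).re

/-- The diagonal increment `a_s(w) = u_{|w|+1}(φ_w s) − u_{|w|}(φ_w s)`. -/
noncomputable def incr {X : Type*} (m : ℕ) (φ : Fin m → X → X) (K : X → X → ℂ)
    (s : X) {k : ℕ} (w : Fin k → Fin m) : ℝ :=
  diag m φ K (k + 1) (phiW φ w s) - diag m φ K k (phiW φ w s)

/-- A unit flow to depth `N` on the rooted `m`-ary word tree:
`θ k w i` is the flow through the edge `(w, wi)` with `|w| = k`. -/
def IsUnitFlow (m N : ℕ) (θ : (k : ℕ) → (Fin k → Fin m) → Fin m → ℝ) : Prop :=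
  (∀ k, k < N → ∀ (w : Fin k → Fin m) (i : Fin m), 0 ≤ θ k w i) ∧
  (∑ i : Fin m, θ 0 (fun j => j.elim0) i = 1) ∧
  (∀ k, k + 1 < N → ∀ (w : Fin k → Fin m) (i : Fin m),
    θ k w i = ∑ j : Fin m, θ (k + 1) (Fin.snoc w i) j)

/-- The energy `𝔈_s(θ) = ∑_e θ(e)² / c_s(e) ∈ [0,∞]`, where the edge `(w,wi)`
has conductance `c_s(w,wi) = a_s(w)/m^{|w|+1}` (with `0/0 = 0` and `x/0 = ∞`
for `x > 0`, as in `ℝ≥0∞`). -/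
noncomputable def energy {X : Type*} (m : ℕ) (φ : Fin m → X → X) (K : X → X → ℂ)
    (s : X) (N : ℕ) (θ : (k : ℕ) → (Fin k → Fin m) → Fin m → ℝ) : ℝ≥0∞ :=
  ∑ k ∈ Finset.range N, ∑ w : Fin k → Fin m, ∑ i : Fin m,
    ENNReal.ofReal (θ k w i) ^ 2 / ENNReal.ofReal (incr m φ K s w / (m : ℝ) ^ (k + 1))

/-- The effective resistance `R_N(s)`: infimum of the energy over unit flows to depth `N`. -/
noncomputable def resistance {X : Type*} (m : ℕ) (φ : Fin m → X → X) (K : X → X → ℂ)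
    (s : X) (N : ℕ) : ℝ≥0∞ :=
  ⨅ (θ : (k : ℕ) → (Fin k → Fin m) → Fin m → ℝ) (_ : IsUnitFlow m N θ),
    energy m φ K s N θ

/-- The scalar series `S(s) = ∑ₖ m^k / (u_{2k+1}(s) − u_{2k}(s)) ∈ [0,∞]`
(a term with zero denominator being `+∞`). -/
noncomputable def Sser {X : Type*} (m : ℕ) (φ : Fin m → X → X) (K : X → X → ℂ)
    (s : X) : ℝ≥0∞ :=
  ∑' k : ℕ,
    (m : ℝ≥0∞) ^ k / ENNReal.ofReal (diag m φ K (2 * k + 1) s - diag m φ K (2 * k) s)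

open scoped NNReal

theorem ENNReal.sq_sum_div_le_sum_sq_div {ι : Type*} (s : Finset ι) (x c : ι → ℝ≥0) :
    (∑ i ∈ s, (x i : ℝ≥0∞)) ^ 2 / ∑ i ∈ s, (c i : ℝ≥0∞) ≤
      ∑ i ∈ s, (x i : ℝ≥0∞) ^ 2 / c i := by
  by_cases hdeg : ∃ i ∈ s, c i = 0 ∧ x i ≠ 0
  · obtain ⟨i, hi, hci, hxi⟩ := hdeg
    calc _ ≤ ⊤ := le_top
      _ = (x i : ℝ≥0∞) ^ 2 / c i := by
        rw [hci, ENNReal.coe_zero, ENNReal.div_zero (pow_ne_zero 2 (by exact_mod_cast hxi))]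
      _ ≤ _ := Finset.single_le_sum (f := fun j => (x j : ℝ≥0∞) ^ 2 / c j)
          (fun _ _ => zero_le) hi
  push Not at hdeg
  have hterm : ∀ i ∈ s, (x i : ℝ≥0∞) ^ 2 / c i = ↑(x i ^ 2 / c i) := by
    intro i hi
    rcases eq_or_ne (c i) 0 with hci | hci
    · simp [hci, hdeg i hi hci]
    · rw [ENNReal.coe_div hci, ENNReal.coe_pow]
  rw [Finset.sum_congr rfl hterm]
  refine ENNReal.div_le_of_le_mul ?_
  have hcs : (∑ i ∈ s, x i) ^ 2 ≤ (∑ i ∈ s, x i ^ 2 / c i) * ∑ i ∈ s, c i := by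
    refine Finset.sum_sq_le_sum_mul_sum_of_sq_le_mul s (fun _ _ => zero_le)
      (fun _ _ => zero_le) fun i hi => ?_
    rcases eq_or_ne (c i) 0 with hci | hci
    · simp [hci, hdeg i hi hci]
    · rw [div_mul_cancel₀ _ hci]
  exact_mod_cast hcs

theorem Fin.sum_tuple_succ_eq_sum_snoc {α M : Type*} [Fintype α] [AddCommMonoid M] {k : ℕ}
    (f : (Fin (k + 1) → α) → M) : ∑ w, f w = ∑ w : Fin k → α, ∑ i, f (Fin.snoc w i) := by
  rw [← (Fin.snocEquiv fun _ => α).sum_comp, Fintype.sum_prod_type, Finset.sum_comm]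
  rfl

theorem IsPD.re_apply_self_nonneg {X : Type*} {J : X → X → ℂ} (hJ : IsPD J) (t : X) :
    0 ≤ (J t t).re := by
  have h := hJ 1 (fun _ => 1) (fun _ => t)
  simp only [map_one, one_mul, Fin.sum_univ_one] at h
  exact (Complex.le_def.mp h).1

section Tower

variable {X : Type*} {m : ℕ} (φ : Fin m → X → X)

theorem IsPD.pullback {J : X → X → ℂ} (hJ : IsPD J) : IsPD (_root_.pullback m φ J) := by
  intro r c p
  have hsplit : ∑ α, ∑ β, (starRingEnd ℂ) (c α) * c β * _root_.pullback m φ J (p α) (p β) =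
      ∑ i, ∑ α, ∑ β, (starRingEnd ℂ) (c α) * c β * J (φ i (p α)) (φ i (p β)) := by
    simp only [_root_.pullback, Finset.mul_sum]
    exact (Finset.sum_congr rfl fun _ _ => Finset.sum_comm).trans Finset.sum_comm
  rw [hsplit]
  exact Finset.sum_nonneg fun i _ => hJ r c fun α => φ i (p α)

theorem isPD_tower_succ_sub {K : X → X → ℂ} (hsub : IsPD fun s t => pullback m φ K s t - K s t)
    (n : ℕ) : IsPD fun s t => tower m φ K (n + 1) s t - tower m φ K n s t := by
  induction n with
  | zero => exact hsub
  | succ n ih =>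
    convert ih.pullback φ using 1
    funext s t
    simp [_root_.pullback, tower, Finset.sum_sub_distrib]

theorem diag_le_diag_succ {K : X → X → ℂ} (hsub : IsPD fun s t => pullback m φ K s t - K s t)
    (n : ℕ) (t : X) : diag m φ K n t ≤ diag m φ K (n + 1) t := by
  have h := (isPD_tower_succ_sub φ hsub n).re_apply_self_nonneg t
  rw [Complex.sub_re] at h
  exact sub_nonneg.mp h

theorem phiW_snoc {k : ℕ} (w : Fin k → Fin m) (i : Fin m) (x : X) :
    phiW φ (Fin.snoc w i) x = φ i (phiW φ w x) := by
  simp only [phiW, Fin.snoc_last, Fin.snoc_castSucc]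

theorem tower_add (K : X → X → ℂ) (n k : ℕ) (s t : X) :
    tower m φ K (n + k) s t = ∑ w : Fin k → Fin m, tower m φ K n (phiW φ w s) (phiW φ w t) := by
  induction k generalizing n with
  | zero => simp [phiW]
  | succ k ih =>
    rw [show n + (k + 1) = n + 1 + k by omega, ih, Fin.sum_tuple_succ_eq_sum_snoc]
    simp only [phiW_snoc]
    rfl

theorem diag_add (K : X → X → ℂ) (n k : ℕ) (s : X) :
    diag m φ K (n + k) s = ∑ w : Fin k → Fin m, diag m φ K n (phiW φ w s) := by
  simp only [diag, tower_add, Complex.re_sum]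

theorem sum_incr (K : X → X → ℂ) (k : ℕ) (s : X) :
    ∑ w : Fin k → Fin m, incr m φ K s w = diag m φ K (2 * k + 1) s - diag m φ K (2 * k) s := by
  rw [show 2 * k + 1 = (k + 1) + k by ring, two_mul, diag_add, diag_add,
    ← Finset.sum_sub_distrib]
  rfl

theorem incr_nonneg {K : X → X → ℂ} (hsub : IsPD fun s t => pullback m φ K s t - K s t) (s : X)
    {k : ℕ} (w : Fin k → Fin m) : 0 ≤ incr m φ K s w :=
  sub_nonneg.mpr (diag_le_diag_succ φ hsub _ _)

end Tower

namespace IsUnitFlow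

variable {m N : ℕ} {θ : (k : ℕ) → (Fin k → Fin m) → Fin m → ℝ}

theorem arity_ne_zero (hθ : IsUnitFlow m N θ) : m ≠ 0 := by
  rintro rfl
  simpa using hθ.2.1

theorem sum_level (hθ : IsUnitFlow m N θ) {k : ℕ} (hk : k < N) :
    ∑ w : Fin k → Fin m, ∑ i, θ k w i = 1 := by
  induction k with
  | zero =>
    convert hθ.2.1
    exact Fintype.sum_unique _
  | succ k ih =>
    rw [Fin.sum_tuple_succ_eq_sum_snoc, ← ih (Nat.lt_of_succ_lt hk)]
    exact Fintype.sum_congr _ _ fun w => Fintype.sum_congr _ _ fun i => (hθ.2.2 k hk w i).symm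

end IsUnitFlow

theorem div_le_level_energy {X : Type*} {m N : ℕ} (φ : Fin m → X → X) {K : X → X → ℂ}
    (hsub : IsPD fun s t => pullback m φ K s t - K s t) (s : X)
    {θ : (k : ℕ) → (Fin k → Fin m) → Fin m → ℝ} (hθ : IsUnitFlow m N θ) {k : ℕ} (hk : k < N) :
    (m : ℝ≥0∞) ^ k / ENNReal.ofReal (diag m φ K (2 * k + 1) s - diag m φ K (2 * k) s) ≤
      ∑ w : Fin k → Fin m, ∑ i,
        ENNReal.ofReal (θ k w i) ^ 2 / ENNReal.ofReal (incr m φ K s w / (m : ℝ) ^ (k + 1)) := by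
  have hm : (0 : ℝ) < m := Nat.cast_pos.mpr (Nat.pos_of_ne_zero hθ.arity_ne_zero)
  have hmE : (m : ℝ≥0∞) ≠ 0 := Nat.cast_ne_zero.mpr hθ.arity_ne_zero
  have hflow : ∑ p : (Fin k → Fin m) × Fin m, ENNReal.ofReal (θ k p.1 p.2) = 1 := by
    rw [← ENNReal.ofReal_sum_of_nonneg fun p _ => hθ.1 k hk p.1 p.2, Fintype.sum_prod_type,
      hθ.sum_level hk, ENNReal.ofReal_one]
  have hcond : ∑ p : (Fin k → Fin m) × Fin m,
        ENNReal.ofReal (incr m φ K s p.1 / (m : ℝ) ^ (k + 1))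
      = ENNReal.ofReal ((diag m φ K (2 * k + 1) s - diag m φ K (2 * k) s) / (m : ℝ) ^ k) := by
    rw [← ENNReal.ofReal_sum_of_nonneg fun p _ =>
        div_nonneg (incr_nonneg φ hsub s p.1) (by positivity),
      Fintype.sum_prod_type, ← sum_incr, Finset.sum_div]
    simp only [Finset.sum_const, Finset.card_univ, Fintype.card_fin, nsmul_eq_mul]
    congr 2
    funext w
    field_simp
    ring
  calc (m : ℝ≥0∞) ^ k / ENNReal.ofReal (diag m φ K (2 * k + 1) s - diag m φ K (2 * k) s)
      = 1 ^ 2 / ENNReal.ofReal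
          ((diag m φ K (2 * k + 1) s - diag m φ K (2 * k) s) / (m : ℝ) ^ k) := by
        rw [ENNReal.ofReal_div_of_pos (by positivity), ENNReal.ofReal_pow hm.le,
          ENNReal.ofReal_natCast, one_pow, one_div,
          ENNReal.inv_div (Or.inl (by simp)) (Or.inl (pow_ne_zero k hmE))]
    _ = (∑ p : (Fin k → Fin m) × Fin m, ENNReal.ofReal (θ k p.1 p.2)) ^ 2 /
          ∑ p : (Fin k → Fin m) × Fin m,
            ENNReal.ofReal (incr m φ K s p.1 / (m : ℝ) ^ (k + 1)) := by
        rw [hflow, hcond]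
    _ ≤ ∑ p : (Fin k → Fin m) × Fin m, ENNReal.ofReal (θ k p.1 p.2) ^ 2 /
          ENNReal.ofReal (incr m φ K s p.1 / (m : ℝ) ^ (k + 1)) :=
        ENNReal.sq_sum_div_le_sum_sq_div _ _ _
    _ = _ := Fintype.sum_prod_type _

theorem sum_le_energy {X : Type*} {m : ℕ} (φ : Fin m → X → X) {K : X → X → ℂ}
    (hsub : IsPD fun s t => pullback m φ K s t - K s t) (s : X) (N : ℕ)
    {θ : (k : ℕ) → (Fin k → Fin m) → Fin m → ℝ} (hθ : IsUnitFlow m N θ) :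
    ∑ k ∈ Finset.range N,
        (m : ℝ≥0∞) ^ k / ENNReal.ofReal (diag m φ K (2 * k + 1) s - diag m φ K (2 * k) s)
      ≤ energy m φ K s N θ :=
  Finset.sum_le_sum fun _ hk => div_le_level_energy φ hsub s hθ (Finset.mem_range.mp hk)

theorem sum_le_resistance {X : Type*} {m : ℕ} (φ : Fin m → X → X) {K : X → X → ℂ}
    (hsub : IsPD fun s t => pullback m φ K s t - K s t) (s : X) (N : ℕ) :
    ∑ k ∈ Finset.range N,
        (m : ℝ≥0∞) ^ k / ENNReal.ofReal (diag m φ K (2 * k + 1) s - diag m φ K (2 * k) s)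
      ≤ resistance m φ K s N :=
  le_iInf₂ fun _ hθ => sum_le_energy φ hsub s N hθ

theorem stmt2_general {X : Type*} (m : ℕ) (φ : Fin m → X → X)
    (K : X → X → ℂ)
    (hsub : IsPD (fun s t => pullback m φ K s t - K s t))
    (s : X) :
    (∀ N : ℕ, 1 ≤ N → ∀ θ, IsUnitFlow m N θ →
      ∑ k ∈ Finset.range N,
          (m : ℝ≥0∞) ^ k / ENNReal.ofReal (diag m φ K (2 * k + 1) s - diag m φ K (2 * k) s)
        ≤ energy m φ K s N θ) ∧
    (∀ N : ℕ, 1 ≤ N →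
      ∑ k ∈ Finset.range N,
          (m : ℝ≥0∞) ^ k / ENNReal.ofReal (diag m φ K (2 * k + 1) s - diag m φ K (2 * k) s)
        ≤ resistance m φ K s N) ∧
    (Sser m φ K s = ⊤ →
      Tendsto (fun N => resistance m φ K s N) atTop (𝓝 ⊤)) := by
  refine ⟨fun N _ _ hθ => sum_le_energy φ hsub s N hθ, fun N _ => sum_le_resistance φ hsub s N,
    fun hS => ?_⟩
  have hpartial := ENNReal.tendsto_nat_tsum fun k =>
    (m : ℝ≥0∞) ^ k / ENNReal.ofReal (diag m φ K (2 * k + 1) s - diag m φ K (2 * k) s)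
  rw [← Sser, hS] at hpartial
  exact tendsto_nhds_top_mono hpartial (Eventually.of_forall (sum_le_resistance φ hsub s))

/-- Cutset lower bound for the energy of any unit flow, the resulting lower bound on
the effective resistance, and divergence of `R_N(s)` when the series diverges. -/
theorem stmt2 {X : Type*} (m : ℕ) (hm : 1 ≤ m) (φ : Fin m → X → X)
    (K : X → X → ℂ) (hK : IsPD K)
    (hsub : IsPD (fun s t => pullback m φ K s t - K s t))
    (s : X) :
    (∀ N : ℕ, 1 ≤ N → ∀ θ, IsUnitFlow m N θ →
      ∑ k ∈ Finset.range N,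
          (m : ℝ≥0∞) ^ k / ENNReal.ofReal (diag m φ K (2 * k + 1) s - diag m φ K (2 * k) s)
        ≤ energy m φ K s N θ) ∧
    (∀ N : ℕ, 1 ≤ N →
      ∑ k ∈ Finset.range N,
          (m : ℝ≥0∞) ^ k / ENNReal.ofReal (diag m φ K (2 * k + 1) s - diag m φ K (2 * k) s)
        ≤ resistance m φ K s N) ∧
    (Sser m φ K s = ⊤ →
      Tendsto (fun N => resistance m φ K s N) atTop (𝓝 ⊤)) :=
  stmt2_general m φ K hsub s
end

section
/- Fix s,t ∈ Y with B(s) < ∞ and B(t) < ∞. Then for every n ≥ 0, ∫_Ω |M_n(s,t;ω)|² dμ(ω) = m^n ∑_{w∈W_n} |J(φ_w(s),φ_w(t))|² ≤ B(s)^{1/2} B(t)^{1/2}. In particular, the martingale (M_n(s,t;·))_{n≥0} is bounded in L²(Ω,μ). -/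
open MeasureTheory Filter Topology
open scoped BigOperators ComplexOrder ENNReal

/-- Positive definiteness of a kernel restricted to a subset `Y ⊆ X`: every finite
Gram matrix at points of `Y` is positive semidefinite. -/
def IsPDOn {X : Type*} (Y : Set X) (J : X → X → ℂ) : Prop :=
  ∀ (r : ℕ) (c : Fin r → ℂ) (p : Fin r → X), (∀ α, p α ∈ Y) →
    0 ≤ ∑ α, ∑ β, (starRingEnd ℂ) (c α) * c β * J (p α) (p β)

/-- The sampled process `Mₙ(s,t;ω) = mⁿ J(φ_{ω|n}(s), φ_{ω|n}(t))`. -/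
noncomputable def Mart {X : Type*} (m : ℕ) (φ : Fin m → X → X) (J : X → X → ℂ)
    (s t : X) (n : ℕ) (ω : ℕ → Fin m) : ℂ :=
  (m : ℂ) ^ n *
    J (phiW φ (fun i : Fin n => ω (i : ℕ)) s) (phiW φ (fun i : Fin n => ω (i : ℕ)) t)

/-- The σ-algebra `Fₙ` on `Ω = {1,…,m}^ℕ` generated by the first `n` coordinates. -/
def Filt (m n : ℕ) : MeasurableSpace (ℕ → Fin m) :=
  MeasurableSpace.comap (fun ω => (fun i : Fin n => ω (i : ℕ))) inferInstance


/-- `B(x) = sup_n mⁿ ∑_{w ∈ W_n} u(φ_w x)² ∈ [0,∞]`, where `u(x) = J(x,x)`. -/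
noncomputable def Bfun {X : Type*} (m : ℕ) (φ : Fin m → X → X) (J : X → X → ℂ)
    (x : X) : ℝ≥0∞ :=
  ⨆ n : ℕ, ENNReal.ofReal
    ((m : ℝ) ^ n * ∑ w : Fin n → Fin m, ((J (phiW φ w x) (phiW φ w x)).re) ^ 2)

/-!
Integrating over `Ω` turns `∫ |Mₙ|²` into a sum over the `mⁿ` cylinders of mass `m⁻ⁿ`, which
gives `mⁿ ∑_w |J(φ_w s, φ_w t)|²`. Positive definiteness makes every `2 × 2` Gram matrix positive
semidefinite, so its determinant yields `|J(a,b)|² ≤ u(a) u(b)`; Cauchy–Schwarz over the words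
then bounds the sum by the square roots of the sums defining `B(s)` and `B(t)`.
-/

section PositiveDefinite

variable {X : Type*} {Y : Set X} {J : X → X → ℂ}

lemma IsPDOn.posSemidef_gram (hJ : IsPDOn Y J) {r : ℕ} {p : Fin r → X} (hp : ∀ α, p α ∈ Y) :
    (Matrix.of fun α β => J (p α) (p β)).PosSemidef := by
  rw [← Matrix.isPositive_toEuclideanLin_iff, LinearMap.isPositive_iff_complex]
  intro x
  have hx : 0 ≤ inner ℂ x ((Matrix.of fun α β => J (p α) (p β)).toEuclideanLin x) := by
    convert hJ r x p hp using 1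
    simp [EuclideanSpace.inner_eq_star_dotProduct, dotProduct, Matrix.mulVec, Finset.sum_mul]
    exact Finset.sum_congr rfl fun _ _ => Finset.sum_congr rfl fun _ _ => by ring
  obtain ⟨a, ha, hxa⟩ := RCLike.nonneg_iff_exists_ofReal.1 hx
  rw [← inner_conj_symm, ← hxa]
  simp [ha]

lemma IsPDOn.norm_sq_le_mul (hJ : IsPDOn Y J) {a b : X} (ha : a ∈ Y) (hb : b ∈ Y) :
    ‖J a b‖ ^ 2 ≤ (J a a).re * (J b b).re := by
  have hG := hJ.posSemidef_gram (p := ![a, b]) (by simp [Fin.forall_fin_two, ha, hb])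
  have hdet := (Complex.nonneg_iff.1 hG.det_nonneg).1
  have hba : J b a = starRingEnd ℂ (J a b) := (hG.1.apply 1 0).symm
  have haa : (J a a).im = 0 := Complex.conj_eq_iff_im.1 (hG.1.apply 0 0)
  rw [Complex.sq_norm, Complex.normSq_apply]
  simpa [Matrix.det_fin_two, hba, haa, Complex.mul_re] using hdet

end PositiveDefinite

theorem MeasureTheory.integral_comp_eq_sum_fintype {Ω α E : Type*} [MeasurableSpace Ω]
    [Fintype α] [MeasurableSpace α] [MeasurableSingletonClass α]
    [NormedAddCommGroup E] [NormedSpace ℝ E] [CompleteSpace E]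
    {μ : Measure Ω} [IsFiniteMeasure μ] {π : Ω → α} (hπ : Measurable π) (g : α → E) :
    ∫ ω, g (π ω) ∂μ = ∑ a, μ.real (π ⁻¹' {a}) • g a := by
  rw [← integral_map hπ.aemeasurable StronglyMeasurable.of_discrete.aestronglyMeasurable,
    integral_fintype .of_finite]
  simp only [map_measureReal_apply hπ (measurableSet_singleton _)]

section Words

variable {X : Type*} {m : ℕ} {φ : Fin m → X → X} {Y : Set X} {J : X → X → ℂ}

lemma phiW_mem (hY : ∀ i : Fin m, ∀ x ∈ Y, φ i x ∈ Y) {n : ℕ} (w : Fin n → Fin m) {x : X}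
    (hx : x ∈ Y) : phiW φ w x ∈ Y := by
  induction n with
  | zero => exact hx
  | succ n ih => exact hY _ _ (ih _)

lemma integral_norm_sq_Mart {μ : Measure (ℕ → Fin m)} [IsFiniteMeasure μ] {n : ℕ}
    (hcyl : ∀ w : Fin n → Fin m, μ {ω | ∀ i : Fin n, ω (i : ℕ) = w i} = ((m : ℝ≥0∞))⁻¹ ^ n)
    (s t : X) :
    ∫ ω, ‖Mart m φ J s t n ω‖ ^ 2 ∂μ
      = (m : ℝ) ^ n * ∑ w : Fin n → Fin m, ‖J (phiW φ w s) (phiW φ w t)‖ ^ 2 := by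
  have hπ : Measurable fun (ω : ℕ → Fin m) (i : Fin n) => ω i :=
    measurable_pi_lambda _ fun i => measurable_pi_apply _
  have hcyl' (w : Fin n → Fin m) :
      μ.real ((fun (ω : ℕ → Fin m) (i : Fin n) => ω i) ⁻¹' {w}) = ((m : ℝ)⁻¹) ^ n := by
    have hpre : (fun (ω : ℕ → Fin m) (i : Fin n) => ω i) ⁻¹' {w}
        = {ω | ∀ i : Fin n, ω (i : ℕ) = w i} := by
      ext ω; simp [funext_iff]
    simp [Measure.real, hpre, hcyl]
  simp only [Mart]
  rw [integral_comp_eq_sum_fintype hπ (fun w => ‖(m : ℂ) ^ n * J (phiW φ w s) (phiW φ w t)‖ ^ 2),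
    Finset.mul_sum]
  refine Finset.sum_congr rfl fun w _ => ?_
  rw [hcyl', smul_eq_mul, norm_mul, norm_pow, Complex.norm_natCast, mul_pow, ← mul_assoc, inv_pow,
    sq ((m : ℝ) ^ n), ← mul_assoc, inv_mul_mul_self]

lemma pow_mul_sum_sq_le_toReal_Bfun (x : X) (hB : Bfun m φ J x < ⊤) (n : ℕ) :
    (m : ℝ) ^ n * ∑ w : Fin n → Fin m, ((J (phiW φ w x) (phiW φ w x)).re) ^ 2
      ≤ (Bfun m φ J x).toReal :=
  (ENNReal.ofReal_le_iff_le_toReal hB.ne).1 (by unfold Bfun; exact le_iSup_of_le n le_rfl)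

lemma pow_mul_sum_norm_sq_le_sqrt_mul_sqrt (hY : ∀ i : Fin m, ∀ x ∈ Y, φ i x ∈ Y)
    (hJ : IsPDOn Y J) {s t : X} (hs : s ∈ Y) (ht : t ∈ Y) (n : ℕ) :
    (m : ℝ) ^ n * ∑ w : Fin n → Fin m, ‖J (phiW φ w s) (phiW φ w t)‖ ^ 2
      ≤ √((m : ℝ) ^ n * ∑ w : Fin n → Fin m, ((J (phiW φ w s) (phiW φ w s)).re) ^ 2)
        * √((m : ℝ) ^ n * ∑ w : Fin n → Fin m, ((J (phiW φ w t) (phiW φ w t)).re) ^ 2) := by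
  set us : (Fin n → Fin m) → ℝ := fun w => (J (phiW φ w s) (phiW φ w s)).re
  set ut : (Fin n → Fin m) → ℝ := fun w => (J (phiW φ w t) (phiW φ w t)).re
  calc (m : ℝ) ^ n * ∑ w, ‖J (phiW φ w s) (phiW φ w t)‖ ^ 2
      ≤ (m : ℝ) ^ n * ∑ w, us w * ut w := by
        gcongr with w
        exact hJ.norm_sq_le_mul (phiW_mem hY w hs) (phiW_mem hY w ht)
    _ ≤ (m : ℝ) ^ n * (√(∑ w, us w ^ 2) * √(∑ w, ut w ^ 2)) := by
        gcongr
        exact Real.sum_mul_le_sqrt_mul_sqrt _ _ _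
    _ = √((m : ℝ) ^ n * ∑ w, us w ^ 2) * √((m : ℝ) ^ n * ∑ w, ut w ^ 2) := by
        rw [Real.sqrt_mul (by positivity), Real.sqrt_mul (by positivity), mul_mul_mul_comm,
          Real.mul_self_sqrt (by positivity)]

end Words

theorem stmt14_general {X : Type*} (m : ℕ) (φ : Fin m → X → X)
    (Y : Set X) (hY : ∀ i : Fin m, ∀ x ∈ Y, φ i x ∈ Y)
    (J : X → X → ℂ) (hJpd : IsPDOn Y J)
    (μ : Measure (ℕ → Fin m)) (hprob : IsProbabilityMeasure μ)
    (hcyl : ∀ (n : ℕ) (w : Fin n → Fin m),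
      μ {ω | ∀ i : Fin n, ω (i : ℕ) = w i} = ((m : ℝ≥0∞))⁻¹ ^ n)
    (s t : X) (hs : s ∈ Y) (ht : t ∈ Y)
    (hBs : Bfun m φ J s < ⊤) (hBt : Bfun m φ J t < ⊤) :
    (∀ n : ℕ,
      ∫ ω, ‖Mart m φ J s t n ω‖ ^ 2 ∂μ
        = (m : ℝ) ^ n * ∑ w : Fin n → Fin m,
            ‖J (phiW φ w s) (phiW φ w t)‖ ^ 2) ∧
    (∀ n : ℕ,
      ∫ ω, ‖Mart m φ J s t n ω‖ ^ 2 ∂μ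
        ≤ Real.sqrt (Bfun m φ J s).toReal * Real.sqrt (Bfun m φ J t).toReal) ∧
    (∃ C : ℝ, ∀ n : ℕ, ∫ ω, ‖Mart m φ J s t n ω‖ ^ 2 ∂μ ≤ C) := by
  have hnorm (n : ℕ) := integral_norm_sq_Mart (φ := φ) (J := J) (hcyl n) s t
  have hbound (n : ℕ) : ∫ ω, ‖Mart m φ J s t n ω‖ ^ 2 ∂μ
      ≤ √(Bfun m φ J s).toReal * √(Bfun m φ J t).toReal := by
    rw [hnorm n]
    refine (pow_mul_sum_norm_sq_le_sqrt_mul_sqrt hY hJpd hs ht n).trans ?_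
    gcongr
    · exact pow_mul_sum_sq_le_toReal_Bfun s hBs n
    · exact pow_mul_sum_sq_le_toReal_Bfun t hBt n
  exact ⟨hnorm, hbound, _, hbound⟩

/-- `L²` bound: `∫ |Mₙ(s,t;·)|² dμ = mⁿ ∑_{w∈W_n} |J(φ_w s, φ_w t)|² ≤ B(s)^{1/2} B(t)^{1/2}`;
in particular the martingale is bounded in `L²(Ω,μ)`. -/
theorem stmt14 {X : Type*} (m : ℕ) (hm : 1 ≤ m) (φ : Fin m → X → X)
    (Y : Set X) (hY : ∀ i : Fin m, ∀ x ∈ Y, φ i x ∈ Y)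
    (J : X → X → ℂ) (hJpd : IsPDOn Y J)
    (hJinv : ∀ s ∈ Y, ∀ t ∈ Y, ∑ i : Fin m, J (φ i s) (φ i t) = J s t)
    (μ : Measure (ℕ → Fin m)) (hprob : IsProbabilityMeasure μ)
    (hcyl : ∀ (n : ℕ) (w : Fin n → Fin m),
      μ {ω | ∀ i : Fin n, ω (i : ℕ) = w i} = ((m : ℝ≥0∞))⁻¹ ^ n)
    (s t : X) (hs : s ∈ Y) (ht : t ∈ Y)
    (hBs : Bfun m φ J s < ⊤) (hBt : Bfun m φ J t < ⊤) :
    (∀ n : ℕ,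
      ∫ ω, ‖Mart m φ J s t n ω‖ ^ 2 ∂μ
        = (m : ℝ) ^ n * ∑ w : Fin n → Fin m,
            ‖J (phiW φ w s) (phiW φ w t)‖ ^ 2) ∧
    (∀ n : ℕ,
      ∫ ω, ‖Mart m φ J s t n ω‖ ^ 2 ∂μ
        ≤ Real.sqrt (Bfun m φ J s).toReal * Real.sqrt (Bfun m φ J t).toReal) ∧
    (∃ C : ℝ, ∀ n : ℕ, ∫ ω, ‖Mart m φ J s t n ω‖ ^ 2 ∂μ ≤ C) :=
  stmt14_general m φ Y hY J hJpd μ hprob hcyl s t hs ht hBs hBt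
end
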